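/- For all w, w', u, u' ∈ ℝᵐ and v ∈ ℝⁿ, P(T(w,v,u), T(w',v,u')) = P((w,v,u), (w',v,u')). In other words, the fibrewise symmetric pairing ⟨(w,v,u),(w',v,u')⟩ = ⟨u,w'⟩ + ⟨u',w⟩ is invariant under every chart change of this form; hence the canonical linear metric on the double vector bundle constructed from a [2]-manifold is independent of the chosen chart. -/
import Mathlib


open Matrix

/-- The fibrewise pairing `P((w,v,u),(w',v',u')) = ⟨u,w'⟩ + ⟨u',w⟩` is invariant under
every chart change `T(w,v,u) = ((ω⁻¹)ᵀ w, ψ v, ω u + ρ(v)((ω⁻¹)ᵀ w))` with `ω`, `ψ`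
invertible and `ρ` linear with skew-symmetric values: for all `w, w', u, u' ∈ ℝᵐ` and
`v ∈ ℝⁿ`, `P(T(w,v,u), T(w',v,u')) = P((w,v,u),(w',v,u'))`. -/
theorem statement7 {m n : ℕ}
    (ω : Matrix (Fin m) (Fin m) ℝ) (hω : IsUnit ω)
    (ψ : Matrix (Fin n) (Fin n) ℝ) (hψ : IsUnit ψ)
    (ρ : (Fin n → ℝ) →ₗ[ℝ] Matrix (Fin m) (Fin m) ℝ)
    (hρ : ∀ v, (ρ v)ᵀ = -ρ v)
    (T : (Fin m → ℝ) × (Fin n → ℝ) × (Fin m → ℝ) →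
         (Fin m → ℝ) × (Fin n → ℝ) × (Fin m → ℝ))
    (hT : ∀ w v u, T (w, v, u) =
      ((ω⁻¹)ᵀ.mulVec w, ψ.mulVec v, ω.mulVec u + (ρ v).mulVec ((ω⁻¹)ᵀ.mulVec w)))
    (P : ((Fin m → ℝ) × (Fin n → ℝ) × (Fin m → ℝ)) →
         ((Fin m → ℝ) × (Fin n → ℝ) × (Fin m → ℝ)) → ℝ)
    (hP : ∀ x y, P x y = x.2.2 ⬝ᵥ y.1 + y.2.2 ⬝ᵥ x.1) :
    ∀ (w w' u u' : Fin m → ℝ) (v : Fin n → ℝ),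
      P (T (w, v, u)) (T (w', v, u')) = P (w, v, u) (w', v, u') := by
  intro w w' u u' v
  rw [hT, hT, hP, hP]
  simp only
  have h1 : ∀ (x y : Fin m → ℝ), ω.mulVec x ⬝ᵥ (ω⁻¹)ᵀ.mulVec y = x ⬝ᵥ y := by
    intro x y
    rw [dotProduct_mulVec, vecMul_transpose, mulVec_mulVec,
      Matrix.nonsing_inv_mul _ (isUnit_iff_isUnit_det ω |>.mp hω), one_mulVec]
  have h2 : ∀ (x y : Fin m → ℝ), (ρ v).mulVec x ⬝ᵥ y = - ((ρ v).mulVec y ⬝ᵥ x) := by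
    intro x y
    rw [dotProduct_comm, dotProduct_mulVec, ← mulVec_transpose, hρ, neg_mulVec,
      neg_dotProduct]
  rw [add_dotProduct, add_dotProduct, h1, h1, h2]
  ring
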